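/- For each T > 0 and compact control interval I ⊆ ℝ, the accessible set A(X₀, T) of the linear system Ẋ = AX + Bu with controls taking values in I is a compact subset of ℝⁿ. -/

import Mathlib

open MeasureTheory Matrix intervalIntegral

/-- The accessible set from `X₀` in time `T` for `Ẋ = AX + Bu`, `X(0) = X₀`,
with measurable controls taking values in the set `I`. -/
def accSetI (n : ℕ) (A : Matrix (Fin n) (Fin n) ℝ) (B X₀ : Fin n → ℝ)
    (I : Set ℝ) (T : ℝ) : Set (Fin n → ℝ) :=
  {x | ∃ u : ℝ → ℝ, Measurable u ∧ (∀ s, u s ∈ I) ∧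
    x = (NormedSpace.exp (T • A)).mulVec X₀ +
      ∫ s in (0:ℝ)..T, u s • (NormedSpace.exp ((T - s) • A)).mulVec B}

/-!
A compact convex `I ⊆ ℝ` is an interval `[a, b]`. By the Riesz representation, controls with
values in `[a, b]` form a subset of `L²` whose image in the weak-* dual is cut out by the closed
conditions `a ∫ g ≤ ⟪u, g⟫ ≤ b ∫ g` for `g ≥ 0`, and is bounded; by Banach–Alaoglu it is compact.
The accessible set is the image of this set under the weak-* continuous map
`u ↦ e^{TA} X₀ + (⟪u, e^{(T-·)A} B i⟫)ᵢ`, hence compact.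
-/

section BoundedControls

variable {α : Type*} [MeasurableSpace α] {μ : Measure α} {a b : ℝ}

theorem MeasureTheory.L2.toDual_apply_eq_integral (U g : Lp ℝ 2 μ) :
    InnerProductSpace.toDual ℝ (Lp ℝ 2 μ) U g = ∫ x, U x * g x ∂μ := by
  simp only [InnerProductSpace.toDual_apply_apply, L2.inner_def, RCLike.inner_apply, conj_trivial,
    mul_comm]

theorem MeasureTheory.L2.integrable_mul (U g : Lp ℝ 2 μ) : Integrable (fun x ↦ U x * g x) μ := by
  simpa only [RCLike.inner_apply, conj_trivial, mul_comm] using L2.integrable_inner (𝕜 := ℝ) U g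

theorem integral_mul_mem_Icc {u g : α → ℝ} (hu : ∀ᵐ x ∂μ, u x ∈ Set.Icc a b) (hg : 0 ≤ᵐ[μ] g)
    (hgi : Integrable g μ) (hugi : Integrable (fun x ↦ u x * g x) μ) :
    ∫ x, u x * g x ∂μ ∈ Set.Icc (a * ∫ x, g x ∂μ) (b * ∫ x, g x ∂μ) := by
  rw [← MeasureTheory.integral_const_mul, ← MeasureTheory.integral_const_mul]
  constructor
  · refine integral_mono_ae (hgi.const_mul a) hugi ?_
    filter_upwards [hu, hg] with x hux hgx using mul_le_mul_of_nonneg_right hux.1 hgx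
  · refine integral_mono_ae hugi (hgi.const_mul b) ?_
    filter_upwards [hu, hg] with x hux hgx using mul_le_mul_of_nonneg_right hux.2 hgx

theorem ae_mem_Icc_of_forall_setIntegral_mem_Icc [IsFiniteMeasure μ] {u : α → ℝ}
    (hu : Integrable u μ)
    (h : ∀ s, MeasurableSet s → μ s < ⊤ →
      ∫ x in s, u x ∂μ ∈ Set.Icc (a * μ.real s) (b * μ.real s)) :
    ∀ᵐ x ∂μ, u x ∈ Set.Icc a b := by
  have hau : (fun _ ↦ a) ≤ᵐ[μ] u := ae_le_of_forall_setIntegral_le (integrable_const a) hu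
    fun s hs hμs ↦ by simpa [mul_comm] using (h s hs hμs).1
  have hub : u ≤ᵐ[μ] fun _ ↦ b := ae_le_of_forall_setIntegral_le hu (integrable_const b)
    fun s hs hμs ↦ by simpa [mul_comm] using (h s hs hμs).2
  filter_upwards [hau, hub] with x hax hbx using ⟨hax, hbx⟩

variable (μ a b) in
def l2Icc : Set (Lp ℝ 2 μ) := {U | ∀ᵐ x ∂μ, U x ∈ Set.Icc a b}

theorem indicatorConstLp_nonneg {p : ENNReal} {s : Set α} (hs : MeasurableSet s) (hμs : μ s ≠ ⊤)
    {c : ℝ} (hc : 0 ≤ c) : 0 ≤ᵐ[μ] (indicatorConstLp p hs hμs c : α → ℝ) := by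
  filter_upwards [indicatorConstLp_coeFn (p := p) (hs := hs) (hμs := hμs) (c := c)] with x hx
  rw [hx]
  exact Set.indicator_nonneg (fun _ _ ↦ hc) x

theorem toWeakDual_toDual_image_l2Icc [IsFiniteMeasure μ] :
    StrongDual.toWeakDual '' (InnerProductSpace.toDual ℝ (Lp ℝ 2 μ) '' l2Icc μ a b) =
      {ℓ | ∀ g : Lp ℝ 2 μ, 0 ≤ᵐ[μ] g → ℓ g ∈ Set.Icc (a * ∫ x, g x ∂μ) (b * ∫ x, g x ∂μ)} := by
  ext ℓ
  constructor
  · rintro ⟨_, ⟨U, hU, rfl⟩, rfl⟩ g hg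
    rw [StrongDual.coe_toWeakDual, L2.toDual_apply_eq_integral]
    exact integral_mul_mem_Icc hU hg ((Lp.memLp g).integrable one_le_two) (L2.integrable_mul U g)
  · intro hℓ
    set U := (InnerProductSpace.toDual ℝ (Lp ℝ 2 μ)).symm (WeakDual.toStrongDual ℓ)
    have hUℓ : StrongDual.toWeakDual (InnerProductSpace.toDual ℝ (Lp ℝ 2 μ) U) = ℓ := by
      simp only [U, LinearIsometryEquiv.apply_symm_apply]
      rfl
    refine ⟨_, ⟨U, ?_, rfl⟩, hUℓ⟩
    refine ae_mem_Icc_of_forall_setIntegral_mem_Icc ((Lp.memLp U).integrable one_le_two)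
      fun s hs hμs ↦ ?_
    have hg := hℓ _ (indicatorConstLp_nonneg (p := 2) hs hμs.ne zero_le_one)
    rwa [integral_indicatorConstLp, smul_eq_mul, mul_one, ← hUℓ, StrongDual.coe_toWeakDual,
      InnerProductSpace.toDual_apply_apply, real_inner_comm, L2.inner_indicatorConstLp_one] at hg

theorem isBounded_l2Icc [IsFiniteMeasure μ] : Bornology.IsBounded (l2Icc μ a b) := by
  refine isBounded_iff_forall_norm_le.2
    ⟨_, fun U hU ↦ Lp.norm_le_of_ae_bound (C := max |a| |b|)
      (le_max_of_le_left (abs_nonneg a)) ?_⟩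
  filter_upwards [hU] with x hx using abs_le_max_abs_abs hx.1 hx.2

theorem isCompact_toWeakDual_toDual_image_l2Icc [IsFiniteMeasure μ] :
    IsCompact
      (StrongDual.toWeakDual '' (InnerProductSpace.toDual ℝ (Lp ℝ 2 μ) '' l2Icc μ a b)) := by
  refine WeakDual.isCompact_of_bounded_of_closed ?_ ?_
  · rw [← WeakDual.isBounded_toWeakDual_preimage_iff_isBounded,
      StrongDual.toWeakDual.injective.preimage_image]
    exact (InnerProductSpace.toDual ℝ (Lp ℝ 2 μ)).lipschitz.isBounded_image isBounded_l2Icc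
  · rw [toWeakDual_toDual_image_l2Icc]
    simp only [Set.ofPred_forall]
    exact isClosed_iInter fun g ↦ isClosed_iInter fun _ ↦
      isClosed_Icc.preimage (WeakDual.eval_continuous g)

theorem setOf_integral_smul_eq_image_l2Icc [IsFiniteMeasure μ] {E : Type*} [NormedAddCommGroup E]
    [NormedSpace ℝ E] (f : α → E) (hab : a ≤ b) :
    {x | ∃ u : α → ℝ, Measurable u ∧ (∀ s, u s ∈ Set.Icc a b) ∧ x = ∫ s, u s • f s ∂μ} =
      (fun U : Lp ℝ 2 μ ↦ ∫ s, U s • f s ∂μ) '' l2Icc μ a b := by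
  ext x
  constructor
  · rintro ⟨u, hu, hua, rfl⟩
    have hu2 : MemLp u 2 μ := MemLp.of_bound hu.aestronglyMeasurable (max |a| |b|)
      (ae_of_all _ fun s ↦ abs_le_max_abs_abs (hua s).1 (hua s).2)
    refine ⟨hu2.toLp u, ?_, integral_congr_ae ?_⟩
    · filter_upwards [hu2.coeFn_toLp] with s hs
      rw [hs]
      exact hua s
    · filter_upwards [hu2.coeFn_toLp] with s hs
      rw [hs]
  · rintro ⟨U, hU, rfl⟩
    have hUu : (U : α → ℝ) =ᵐ[μ] fun s ↦ max a (min b (U s)) := by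
      filter_upwards [hU] with s hs
      rw [min_eq_right hs.2, max_eq_right hs.1]
    refine ⟨_, measurable_const.max (measurable_const.min (Lp.stronglyMeasurable U).measurable),
      fun s ↦ ⟨le_max_left _ _, max_le hab (min_le_left _ _)⟩, integral_congr_ae ?_⟩
    filter_upwards [hUu] with s hs
    rw [← hs]

theorem integral_coeFn_smul_apply {ι : Type*} [Fintype ι] {f : α → ι → ℝ} (hf : MemLp f 2 μ)
    (U : Lp ℝ 2 μ) (i : ι) :
    (∫ s, U s • f s ∂μ) i = InnerProductSpace.toDual ℝ (Lp ℝ 2 μ) U ((hf.eval i).toLp _) := by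
  have hfi : (fun s ↦ U s * f s i) =ᵐ[μ] fun s ↦ U s * (hf.eval i).toLp _ s := by
    filter_upwards [(hf.eval i).coeFn_toLp] with s hs
    rw [hs]
  rw [L2.toDual_apply_eq_integral, ← integral_congr_ae hfi, eval_integral]
  · rfl
  · exact fun j ↦ (L2.integrable_mul U ((hf.eval j).toLp _)).congr
      (((hf.eval j).coeFn_toLp).mono fun s hs ↦ by simp only [hs, Pi.smul_apply, smul_eq_mul])

theorem isCompact_setOf_integral_smul [IsFiniteMeasure μ] {ι : Type*} [Fintype ι]
    {f : α → ι → ℝ} (hf : MemLp f 2 μ) (hab : a ≤ b) :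
    IsCompact {x | ∃ u : α → ℝ, Measurable u ∧ (∀ s, u s ∈ Set.Icc a b) ∧
      x = ∫ s, u s • f s ∂μ} := by
  have hfactor : (fun U : Lp ℝ 2 μ ↦ ∫ s, U s • f s ∂μ) =
      (fun ℓ : WeakDual ℝ (Lp ℝ 2 μ) ↦ fun i ↦ ℓ ((hf.eval i).toLp _)) ∘
        StrongDual.toWeakDual ∘ InnerProductSpace.toDual ℝ (Lp ℝ 2 μ) :=
    funext fun U ↦ funext (integral_coeFn_smul_apply hf U)
  rw [setOf_integral_smul_eq_image_l2Icc f hab, hfactor, Set.image_comp, Set.image_comp]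
  exact isCompact_toWeakDual_toDual_image_l2Icc.image
    (continuous_pi fun i ↦ WeakDual.eval_continuous _)

theorem isCompact_setOf_intervalIntegral_smul {ι : Type*} [Fintype ι] {f : ℝ → ι → ℝ}
    (hf : Continuous f) (hab : a ≤ b) (t₀ t₁ : ℝ) :
    IsCompact {x | ∃ u : ℝ → ℝ, Measurable u ∧ (∀ s, u s ∈ Set.Icc a b) ∧
      x = ∫ s in t₀..t₁, u s • f s} := by
  have : IsFiniteMeasure (volume.restrict (Set.uIoc t₀ t₁)) := ⟨by simp⟩
  obtain ⟨C, hC⟩ :=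
    (isCompact_uIcc (a := t₀) (b := t₁)).exists_bound_of_continuousOn hf.continuousOn
  have hf2 : MemLp f 2 (volume.restrict (Set.uIoc t₀ t₁)) :=
    MemLp.of_bound hf.aestronglyMeasurable C <|
      ae_restrict_of_forall_mem measurableSet_uIoc fun s hs ↦ hC s (Set.uIoc_subset_uIcc hs)
  have hset : {x | ∃ u : ℝ → ℝ, Measurable u ∧ (∀ s, u s ∈ Set.Icc a b) ∧
      x = ∫ s in t₀..t₁, u s • f s} = ((if t₀ ≤ t₁ then 1 else -1 : ℝ) • ·) ''
        {x | ∃ u : ℝ → ℝ, Measurable u ∧ (∀ s, u s ∈ Set.Icc a b) ∧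
          x = ∫ s in Set.uIoc t₀ t₁, u s • f s} := by
    simp_rw [intervalIntegral_eq_integral_uIoc]
    ext x
    constructor
    · rintro ⟨u, hu, hua, rfl⟩
      exact ⟨_, ⟨u, hu, hua, rfl⟩, rfl⟩
    · rintro ⟨_, ⟨u, hu, hua, rfl⟩, rfl⟩
      exact ⟨u, hu, hua, rfl⟩
  rw [hset]
  exact (isCompact_setOf_integral_smul hf2 hab).image (continuous_const_smul _)

end BoundedControls

open scoped Norms.Operator in
theorem Matrix.continuous_exp {m : Type*} [Fintype m] [DecidableEq m] :
    Continuous (NormedSpace.exp : Matrix m m ℝ → Matrix m m ℝ) :=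
  NormedSpace.exp_continuous

theorem stmt5_general (n : ℕ) (A : Matrix (Fin n) (Fin n) ℝ) (B X₀ : Fin n → ℝ)
    (I : Set ℝ) (hIc : IsCompact I) (hIconv : Convex ℝ I)
    (T : ℝ) :
    IsCompact ((accSetI n A B X₀ I T) : Set (Fin n → ℝ)) := by
  rcases I.eq_empty_or_nonempty with rfl | hI
  · convert isCompact_empty
    ext x
    simp [accSetI]
  have hIcc : I = Set.Icc (sInf I) (sSup I) :=
    eq_Icc_of_connected_compact (hIconv.isConnected hI) hIc
  have hf : Continuous fun s : ℝ ↦ (NormedSpace.exp ((T - s) • A)).mulVec B :=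
    (Matrix.continuous_exp.comp ((continuous_const.sub continuous_id).smul
      continuous_const)).matrix_mulVec continuous_const
  have hK := isCompact_setOf_intervalIntegral_smul hf
    (csInf_le_csSup hI hIc.bddBelow hIc.bddAbove) 0 T
  rw [← hIcc] at hK
  have hset : accSetI n A B X₀ I T = ((NormedSpace.exp (T • A)).mulVec X₀ + ·) ''
      {x | ∃ u : ℝ → ℝ, Measurable u ∧ (∀ s, u s ∈ I) ∧
        x = ∫ s in (0:ℝ)..T, u s • (NormedSpace.exp ((T - s) • A)).mulVec B} := by
    ext x
    constructor
    · rintro ⟨u, hu, huI, rfl⟩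
      exact ⟨_, ⟨u, hu, huI, rfl⟩, rfl⟩
    · rintro ⟨_, ⟨u, hu, huI, rfl⟩, rfl⟩
      exact ⟨u, hu, huI, rfl⟩
  exact hset ▸ hK.image (continuous_const_add _)

/-- For `T > 0` and a compact control interval `I`, the accessible set
`A(X₀, T)` is compact. -/
theorem stmt5 (n : ℕ) (A : Matrix (Fin n) (Fin n) ℝ) (B X₀ : Fin n → ℝ)
    (I : Set ℝ) (hIc : IsCompact I) (hIconv : Convex ℝ I)
    (T : ℝ) (hT : 0 < T) :
    IsCompact ((accSetI n A B X₀ I T) : Set (Fin n → ℝ)) :=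
  stmt5_general n A B X₀ I hIc hIconv T
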